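/- arXiv:1802.07098 — 2 statements merged into one kernel-verified Lean document; each statement's English description precedes it below -/
import Mathlib

section
/- For a submodular function f on subsets of a finite ground set N whose elements are linearly ordered as u_1, ..., u_n, define f(u_i : S) = f(S ∩ {u_1,...,u_{i-1}} ∪ {u_i}) - f(S ∩ {u_1,...,u_{i-1}}) for any S ⊆ N. Then for every two sets S, T ⊆ N, f((S \ T) ∪ T) - f(S \ T) ≤ ∑_{u ∈ T} f(u : S). -/
lemma telescope_aux {n : ℕ} (f : Finset (Fin n) → ℝ) (A : Finset (Fin n)) :
    ∀ T : Finset (Fin n), (∀ u ∈ T, u ∉ A) →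
      ∑ u ∈ T, (f (insert u (A ∪ T.filter (· < u))) - f (A ∪ T.filter (· < u)))
        = f (A ∪ T) - f A := by
  intro T
  induction T using Finset.induction_on_max with
  | empty => simp
  | insert a s hlt ih =>
    intro hdisj
    have ha : a ∉ s := fun h => lt_irrefl a (hlt a h)
    rw [Finset.sum_insert ha]
    have hfilt : ∀ u ∈ s, (insert a s).filter (· < u) = s.filter (· < u) := by
      intro u hu
      rw [Finset.filter_insert]
      have : ¬ a < u := fun h => lt_irrefl a (h.trans (hlt u hu))
      simp [this]
    have hsum : ∑ u ∈ s, (f (insert u (A ∪ (insert a s).filter (· < u))) -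
        f (A ∪ (insert a s).filter (· < u)))
        = ∑ u ∈ s, (f (insert u (A ∪ s.filter (· < u))) - f (A ∪ s.filter (· < u))) := by
      apply Finset.sum_congr rfl
      intro u hu
      rw [hfilt u hu]
    rw [hsum, ih (fun u hu => hdisj u (Finset.mem_insert_of_mem hu))]
    have hfa : (insert a s).filter (· < a) = s := by
      rw [Finset.filter_insert]
      simp only [lt_irrefl, if_false]
      exact Finset.filter_true_of_mem hlt
    rw [hfa]
    have : insert a (A ∪ s) = A ∪ insert a s := by
      rw [Finset.union_insert]
    rw [this]
    ring

/-- Observation: `f(T | S \ T) ≤ f(T : S)`.  The ground set is `Fin n` with its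
natural linear order; `f(u : S)` is the marginal of `u` with respect to the part
of `S` preceding `u`. -/
theorem stmt0 {n : ℕ} (f : Finset (Fin n) → ℝ)
    (hsub : ∀ A B : Finset (Fin n), A ⊆ B → ∀ x ∉ B,
      f (insert x A) - f A ≥ f (insert x B) - f B)
    (S T : Finset (Fin n)) :
    f ((S \ T) ∪ T) - f (S \ T) ≤
      ∑ u ∈ T, (f (insert u (S.filter (· < u))) - f (S.filter (· < u))) := by
  have hdisj : ∀ u ∈ T, u ∉ S \ T := fun u hu h => (Finset.mem_sdiff.mp h).2 hu
  rw [← telescope_aux f (S \ T) T hdisj]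
  apply Finset.sum_le_sum
  intro u hu
  apply hsub
  · intro x hx
    rw [Finset.mem_filter] at hx
    by_cases hxT : x ∈ T
    · exact Finset.mem_union_right _ (Finset.mem_filter.mpr ⟨hxT, hx.2⟩)
    · exact Finset.mem_union_left _ (Finset.mem_sdiff.mpr ⟨hx.1, hxT⟩)
  · intro h
    rcases Finset.mem_union.mp h with h | h
    · exact hdisj u hu h
    · exact lt_irrefl u (Finset.mem_filter.mp h).2
end

section
/- Let f : 2^N → ℝ be submodular, c > 0, U ⊆ S ⊆ N, u ∉ S, and suppose f(S ∪ {u}) - f(S) ≥ (1+c)·M and f(S) - f(S \ U) ≤ M for some real M ≥ 0. Then f((S \ U) ∪ {u}) - f(S) ≥ c·M. -/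
/-- Inequality (1): accepting an element whose marginal exceeds `(1+c)` times the
value of the removed set `U` increases the solution value by at least `c·M`. -/
theorem stmt11 {α : Type*} [DecidableEq α] (f : Finset α → ℝ)
    (hsub : ∀ A B : Finset α, A ⊆ B → ∀ x ∉ B,
      f (insert x A) - f A ≥ f (insert x B) - f B)
    (c : ℝ) (hc : 0 < c) (M : ℝ) (hM : 0 ≤ M)
    (S U : Finset α) (hU : U ⊆ S) (u : α) (hu : u ∉ S)
    (h1 : f (S ∪ {u}) - f S ≥ (1 + c) * M)
    (h2 : f S - f (S \ U) ≤ M) :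
    f ((S \ U) ∪ {u}) - f S ≥ c * M := by
  have hs := hsub (S \ U) S (Finset.sdiff_subset) u hu
  have e1 : S ∪ {u} = insert u S := by rw [Finset.union_comm]; rfl
  have e2 : (S \ U) ∪ {u} = insert u (S \ U) := by rw [Finset.union_comm]; rfl
  rw [e1] at h1
  rw [e2]
  linarith
end
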